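/- arXiv:2503.22905 — 3 statements merged into one kernel-verified Lean document; each statement's English description precedes it below -/
import Mathlib

section
/- Let η be a Borel probability measure on Γ_T with (e_T)_#η = L^d, and let {γ_y}_{y∈T^d} be a Borel family of paths in Γ_T such that {δ_{γ_y}}_{y∈T^d} is a disintegration of η with respect to e_T and L^d. Define ν := (e_0,e_T)_#η on T^d × T^d, and for (x,y) ∈ T^d × T^d define the measure δ_{x,γ_y} on Γ_T by δ_{x,γ_y} := δ_{γ_y} if γ_y(0) = x and δ_{x,γ_y} := 0 otherwise. Then {δ_{x,γ_y}}_{(x,y)∈T^d×T^d} is a disintegration of η with respect to the map (e_0,e_T) : Γ_T → T^d × T^d and the measure ν. -/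
open MeasureTheory Set Filter Topology
open scoped ENNReal

noncomputable section

/-- The `d`-dimensional flat torus `ℝ^d/ℤ^d`. -/
abbrev Torus (d : ℕ) : Type := Fin d → AddCircle (1 : ℝ)

/-- Values of vector fields: `ℝ^d` with the Euclidean norm. -/
abbrev Vec (d : ℕ) : Type := EuclideanSpace ℝ (Fin d)

/-- The canonical projection `ℝ^d → 𝕋^d`. -/
def projT (d : ℕ) (x : Vec d) : Torus d := fun i => (x i : AddCircle (1 : ℝ))

/-- The path space `Γ_T = C([0,T]; 𝕋^d)` with the supremum metric. -/
abbrev PathSpace (T : ℝ) (d : ℕ) : Type := C(Set.Icc (0 : ℝ) T, Torus d)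

instance (T : ℝ) (d : ℕ) : MeasurableSpace (PathSpace T d) := borel _
instance (T : ℝ) (d : ℕ) : BorelSpace (PathSpace T d) := ⟨rfl⟩

/-- Extension of a path `γ : [0,T] → 𝕋^d` to all of `ℝ` by projection onto `[0,T]`. -/
def extendPath {T : ℝ} {d : ℕ} (hT : 0 ≤ T) (γ : PathSpace T d) : ℝ → Torus d :=
  fun s => γ (Set.projIcc 0 T hT s)

/-- `γ` is an integral curve of `b`:  `s ↦ b(s,γ(s))` is integrable on `(0,T)` and
`γ(t) = γ(0) + ∫_0^t b(s,γ(s)) ds` for all `t ∈ [0,T]`, the integral computed in `ℝ^d`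
and projected to the torus. -/
def IsIntegralCurveOf {T : ℝ} {d : ℕ} (hT : 0 ≤ T) (b : ℝ → Torus d → Vec d)
    (γ : PathSpace T d) : Prop :=
  MeasureTheory.IntegrableOn (fun s => b s (extendPath hT γ s)) (Set.Ioc 0 T) volume ∧
  ∀ t : Set.Icc (0 : ℝ) T,
    γ t = γ ⟨0, Set.left_mem_Icc.2 hT⟩
      + projT d (∫ s in Set.Ioc (0 : ℝ) (t : ℝ), b s (extendPath hT γ s))

/-- `η` is concentrated on integral curves of `b`. -/
def ConcentratedOnCurves {T : ℝ} {d : ℕ} (hT : 0 ≤ T) (b : ℝ → Torus d → Vec d)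
    (η : Measure (PathSpace T d)) : Prop :=
  ∀ᵐ γ ∂η, IsIntegralCurveOf hT b γ

/-- `{k y}_{y}` is a disintegration of `μ` with respect to `f` and `ν`:
a Borel family of measures, with `k y` concentrated on `f⁻¹(y)` and
`μ(A) = ∫ k y (A) dν(y)` for every Borel set `A`. -/
def IsDisintegration {X Y : Type*} [MeasurableSpace X] [MeasurableSpace Y]
    (μ : Measure X) (f : X → Y) (ν : Measure Y) (k : Y → Measure X) : Prop :=
  (∀ A : Set X, MeasurableSet A → Measurable fun y => k y A) ∧
  (∀ y : Y, k y ((f ⁻¹' {y})ᶜ) = 0) ∧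
  (∀ A : Set X, MeasurableSet A → μ A = ∫⁻ y, k y A ∂ν)

/-- A disintegration consisting of probability measures. -/
def IsProbDisintegration {X Y : Type*} [MeasurableSpace X] [MeasurableSpace Y]
    (μ : Measure X) (f : X → Y) (ν : Measure Y) (k : Y → Measure X) : Prop :=
  (∀ y : Y, IsProbabilityMeasure (k y)) ∧ IsDisintegration μ f ν k

/-! Each `δ_{γ_y}` is concentrated on `e_T⁻¹(y)`, so `γ_y(T) = y`, and the disintegration formula
then says that `η`-a.e. path `γ` is the path `γ_{γ(T)}` attached to its own endpoint. Hence
`δ_{γ(0), γ_{γ(T)}} = δ_γ` for `η`-a.e. `γ`, and integrating `δ_{x,γ_y}(A)` against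
`ν = (e_0, e_T)_# η` gives `∫ δ_γ(A) dη(γ) = η(A)`. -/

section DiracDisintegration

variable {X Y Z : Type*} [MeasurableSpace X] [MeasurableSpace Y] [MeasurableSpace Z]
  {μ : Measure X} {f : X → Y} {ν : Measure Y} {k : Y → X}

theorem IsDisintegration.leftInverse_of_dirac [MeasurableSingletonClass X]
    (h : IsDisintegration μ f ν fun y => Measure.dirac (k y)) : Function.LeftInverse f k := by
  intro y
  have hy := h.2.1 y
  rw [Measure.dirac_apply, Set.indicator_apply_eq_zero] at hy
  simpa using mt (hy ·) one_ne_zero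

theorem IsDisintegration.comp_ae_eq_id_of_dirac [MeasurableEq X] (hf : Measurable f)
    (hk : Measurable k) (h : IsDisintegration μ f ν fun y => Measure.dirac (k y)) :
    k ∘ f =ᵐ[μ] id := by
  have hS := measurableSet_eq_fun (hk.comp hf) measurable_id
  rw [EventuallyEq, ae_iff, ← Set.compl_ofPred, h.2.2 _ hS.compl]
  simp [Measure.dirac_apply, h.leftInverse_of_dirac _]

theorem IsDisintegration.prodMk_of_dirac [MeasurableEq X] [MeasurableEq Z] [DecidableEq Z]
    {g : X → Z} (hf : Measurable f) (hg : Measurable g) (hk : Measurable k)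
    (h : IsDisintegration μ f ν fun y => Measure.dirac (k y)) :
    IsDisintegration μ (fun x => (g x, f x)) (μ.map fun x => (g x, f x))
      (fun p => if g (k p.2) = p.1 then Measure.dirac (k p.2) else 0) := by
  have hkernel : ∀ A, MeasurableSet A → Measurable fun p : Z × Y =>
      (if g (k p.2) = p.1 then Measure.dirac (k p.2) else 0) A := by
    intro A hA
    simp only [apply_ite (fun m : Measure X => m A), Measure.coe_zero, Pi.zero_apply]
    exact Measurable.ite (measurableSet_eq_fun (hg.comp (hk.comp measurable_snd)) measurable_fst)
      ((h.1 A hA).comp measurable_snd) measurable_const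
  refine ⟨hkernel, fun p => ?_, fun A hA => ?_⟩
  · dsimp only
    split_ifs with hp
    · simp [Measure.dirac_apply, hp, h.leftInverse_of_dirac p.2]
    · rfl
  · rw [lintegral_map (hkernel A hA) (hg.prodMk hf)]
    calc μ A = ∫⁻ x, Measure.dirac x A ∂μ := by
          simp [Measure.dirac_apply' _ hA, lintegral_indicator_one hA]
      _ = _ := by
          refine lintegral_congr_ae ?_
          filter_upwards [h.comp_ae_eq_id_of_dirac hf hk] with x (hx : k (f x) = x)
          simp [hx]

end DiracDisintegration

open scoped Classical in
theorem stmt_10_general (T : ℝ) (hT : 0 < T) (d : ℕ)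
    (η : Measure (PathSpace T d))
    (γY : Torus d → PathSpace T d) (hγY : Measurable γY)
    (hdis : IsProbDisintegration η
      (fun γ : PathSpace T d => γ ⟨T, Set.right_mem_Icc.2 hT.le⟩)
      (volume : Measure (Torus d)) (fun y => Measure.dirac (γY y))) :
    IsDisintegration η
      (fun γ : PathSpace T d =>
        (γ ⟨0, Set.left_mem_Icc.2 hT.le⟩, γ ⟨T, Set.right_mem_Icc.2 hT.le⟩))
      (Measure.map (fun γ : PathSpace T d =>
        (γ ⟨0, Set.left_mem_Icc.2 hT.le⟩, γ ⟨T, Set.right_mem_Icc.2 hT.le⟩)) η)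
      (fun p : Torus d × Torus d =>
        if (γY p.2) ⟨0, Set.left_mem_Icc.2 hT.le⟩ = p.1 then Measure.dirac (γY p.2) else 0) :=
  IsDisintegration.prodMk_of_dirac (continuous_eval_const _).measurable
    (continuous_eval_const _).measurable hγY hdis.2

open scoped Classical in
/-- the family `δ_{x,γ_y}` (equal to `δ_{γ_y}` if `γ_y(0) = x` and `0`
otherwise) is a disintegration of `η` with respect to `(e_0,e_T)` and `ν = (e_0,e_T)_#η`. -/
theorem stmt_10 (T : ℝ) (hT : 0 < T) (d : ℕ)
    (η : Measure (PathSpace T d)) [IsProbabilityMeasure η]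
    (heT : Measure.map (fun γ : PathSpace T d => γ ⟨T, Set.right_mem_Icc.2 hT.le⟩) η
      = (volume : Measure (Torus d)))
    (γY : Torus d → PathSpace T d) (hγY : Measurable γY)
    (hdis : IsProbDisintegration η
      (fun γ : PathSpace T d => γ ⟨T, Set.right_mem_Icc.2 hT.le⟩)
      (volume : Measure (Torus d)) (fun y => Measure.dirac (γY y))) :
    IsDisintegration η
      (fun γ : PathSpace T d =>
        (γ ⟨0, Set.left_mem_Icc.2 hT.le⟩, γ ⟨T, Set.right_mem_Icc.2 hT.le⟩))
      (Measure.map (fun γ : PathSpace T d =>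
        (γ ⟨0, Set.left_mem_Icc.2 hT.le⟩, γ ⟨T, Set.right_mem_Icc.2 hT.le⟩)) η)
      (fun p : Torus d × Torus d =>
        if (γY p.2) ⟨0, Set.left_mem_Icc.2 hT.le⟩ = p.1 then Measure.dirac (γY p.2) else 0) :=
  stmt_10_general T hT d η γY hγY hdis
end
end

section
/- Let η be a Borel probability measure on Γ_T with (e_0)_#η = L^d and (e_T)_#η = L^d, and let {γ_y}_{y∈T^d} be a Borel family of paths in Γ_T such that {δ_{γ_y}}_{y∈T^d} is a disintegration of η with respect to e_T and L^d. Define ν := (e_0,e_T)_#η on T^d × T^d, let π_0(x,y) = x and π_1(x,y) = y be the coordinate projections, let {ν_x}_{x∈T^d} be a disintegration of ν with respect to π_0 and L^d, and set ν̃_x := (π_1)_#ν_x. Then for every disintegration {η_{0,x}}_{x∈T^d} of η with respect to e_0 and L^d, one has, for L^d-a.e. x ∈ T^d, η_{0,x}(A) = ∫_{T^d} δ_{γ_y}(A) dν̃_x(y) for every Borel set A ⊆ Γ_T. -/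
open MeasureTheory Set Filter Topology
open scoped ENNReal

noncomputable section

lemma countable_generatePiSystem' {α : Type*} {S : Set (Set α)} (hS : S.Countable) :
    (generatePiSystem S).Countable := by
  have h : generatePiSystem S ⊆ Set.sInter '' {F | F.Finite ∧ F ⊆ S} := by
    intro t ht
    induction ht with
    | base hs => exact ⟨{_}, ⟨Set.finite_singleton _, Set.singleton_subset_iff.2 hs⟩,
        Set.sInter_singleton _⟩
    | inter h1 h2 hne ih1 ih2 =>
      obtain ⟨F, ⟨hF1, hF2⟩, rfl⟩ := ih1
      obtain ⟨G, ⟨hG1, hG2⟩, rfl⟩ := ih2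
      exact ⟨F ∪ G, ⟨hF1.union hG1, Set.union_subset hF2 hG2⟩, Set.sInter_union F G⟩
  exact ((Set.countable_setOf_finite_subset hS).image _).mono h

lemma disint_setLIntegral {X Y : Type*} [MeasurableSpace X] [MeasurableSpace Y]
    {μ : Measure X} {f : X → Y} (hf : Measurable f) {ν : Measure Y} {k : Y → Measure X}
    (hk : IsDisintegration μ f ν k) {S : Set Y} (hS : MeasurableSet S)
    {A : Set X} (hA : MeasurableSet A) :
    ∫⁻ y in S, k y A ∂ν = μ (f ⁻¹' S ∩ A) := by
  rw [hk.2.2 _ ((hf hS).inter hA), ← lintegral_indicator hS]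
  refine lintegral_congr fun y => ?_
  by_cases hy : y ∈ S
  · rw [Set.indicator_of_mem hy, Set.inter_comm]
    exact (measure_inter_conull (measure_mono_null (Set.compl_subset_compl.2
      (Set.preimage_mono (Set.singleton_subset_iff.2 hy))) (hk.2.1 y))).symm
  · rw [Set.indicator_of_notMem hy]
    refine (measure_mono_null ?_ (hk.2.1 y)).symm
    intro z hz
    simp only [Set.mem_compl_iff, Set.mem_preimage, Set.mem_singleton_iff]
    rintro rfl
    exact hy hz.1

instance : IsProbabilityMeasure (volume : Measure (AddCircle (1:ℝ))) :=
  ⟨by rw [AddCircle.measure_univ]; simp⟩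

/-- representation of the disintegration of `η` at the initial time:
`η_{0,x} = ∫ δ_{γ_y} dν̃_x(y)` for a.e. `x`, where `ν̃_x = (π_1)_#ν_x`. -/
theorem stmt_11 (T : ℝ) (hT : 0 < T) (d : ℕ)
    (η : Measure (PathSpace T d)) [IsProbabilityMeasure η]
    (he0 : Measure.map (fun γ : PathSpace T d => γ ⟨0, Set.left_mem_Icc.2 hT.le⟩) η
      = (volume : Measure (Torus d)))
    (heT : Measure.map (fun γ : PathSpace T d => γ ⟨T, Set.right_mem_Icc.2 hT.le⟩) η
      = (volume : Measure (Torus d)))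
    (γY : Torus d → PathSpace T d) (hγY : Measurable γY)
    (hdisT : IsProbDisintegration η
      (fun γ : PathSpace T d => γ ⟨T, Set.right_mem_Icc.2 hT.le⟩)
      (volume : Measure (Torus d)) (fun y => Measure.dirac (γY y)))
    (νx : Torus d → Measure (Torus d × Torus d))
    (hνx : IsProbDisintegration
      (Measure.map (fun γ : PathSpace T d =>
        (γ ⟨0, Set.left_mem_Icc.2 hT.le⟩, γ ⟨T, Set.right_mem_Icc.2 hT.le⟩)) η)
      (fun p : Torus d × Torus d => p.1) (volume : Measure (Torus d)) νx) :
    ∀ k : Torus d → Measure (PathSpace T d),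
      IsProbDisintegration η
        (fun γ : PathSpace T d => γ ⟨0, Set.left_mem_Icc.2 hT.le⟩)
        (volume : Measure (Torus d)) k →
      ∀ᵐ x ∂(volume : Measure (Torus d)),
        ∀ A : Set (PathSpace T d), MeasurableSet A →
          k x A = ∫⁻ y, Measure.dirac (γY y) A
            ∂(Measure.map (fun p : Torus d × Torus d => p.2) (νx x)) := by
  intro k hk
  have me0 : Measurable (fun γ : PathSpace T d => γ ⟨0, Set.left_mem_Icc.2 hT.le⟩) :=
    (continuous_eval_const _).measurable
  have meT : Measurable (fun γ : PathSpace T d => γ ⟨T, Set.right_mem_Icc.2 hT.le⟩) :=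
    (continuous_eval_const _).measurable
  have mpair : Measurable (fun γ : PathSpace T d =>
      (γ ⟨0, Set.left_mem_Icc.2 hT.le⟩, γ ⟨T, Set.right_mem_Icc.2 hT.le⟩)) := me0.prodMk meT
  have mB : ∀ {A : Set (PathSpace T d)}, MeasurableSet A →
      MeasurableSet ((fun p : Torus d × Torus d => γY p.2) ⁻¹' A) :=
    fun hA => (hγY.comp measurable_snd) hA
  -- a.e. fixed point : γY (γ T) = γ for η-a.e. γ
  have hCmeas : MeasurableSet {γ : PathSpace T d | γY (γ ⟨T, Set.right_mem_Icc.2 hT.le⟩) = γ} :=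
    ((hγY.comp meT).stronglyMeasurable).measurableSet_eq_fun stronglyMeasurable_id
  have hfix : ∀ᵐ γ ∂η, γY (γ ⟨T, Set.right_mem_Icc.2 hT.le⟩) = γ := by
    have hzero : ∀ y : Torus d, Measure.dirac (γY y)
        ({γ : PathSpace T d | γY (γ ⟨T, Set.right_mem_Icc.2 hT.le⟩) = γ}ᶜ) = 0 := by
      intro y
      have hy : (γY y) ⟨T, Set.right_mem_Icc.2 hT.le⟩ = y := by
        have h0 := hdisT.2.2.1 y
        rw [Measure.dirac_apply' _ ((meT (measurableSet_singleton y)).compl)] at h0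
        by_contra hne
        have hmem : γY y ∈ ((fun γ : PathSpace T d =>
            γ ⟨T, Set.right_mem_Icc.2 hT.le⟩) ⁻¹' {y})ᶜ := by simpa using hne
        rw [Set.indicator_of_mem hmem, Pi.one_apply] at h0
        exact one_ne_zero h0
      rw [Measure.dirac_apply' _ hCmeas.compl,
        Set.indicator_of_notMem (by simp [hy])]
    have hη : η ({γ : PathSpace T d | γY (γ ⟨T, Set.right_mem_Icc.2 hT.le⟩) = γ}ᶜ) = 0 := by
      rw [hdisT.2.2.2 _ hCmeas.compl]
      simp [hzero]
    rw [ae_iff, ← Set.compl_setOf]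
    exact hη
  -- key pointwise (in A) claim
  have key : ∀ A : Set (PathSpace T d), MeasurableSet A →
      ∀ᵐ x ∂(volume : Measure (Torus d)),
        k x A = νx x ((fun p : Torus d × Torus d => γY p.2) ⁻¹' A) := by
    intro A hA
    refine ae_eq_of_forall_setLIntegral_eq_of_sigmaFinite (hk.2.1 A hA) (hνx.2.1 _ (mB hA))
      fun S hS _ => ?_
    rw [disint_setLIntegral me0 hk.2 hS hA, disint_setLIntegral measurable_fst hνx.2 hS (mB hA),
      Measure.map_apply mpair ((measurable_fst hS).inter (mB hA))]
    refine measure_congr ?_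
    rw [Filter.eventuallyEq_set]
    filter_upwards [hfix] with γ hγ
    simp only [Set.preimage_inter, Set.mem_inter_iff, Set.mem_preimage, hγ]
  -- countable generating π-system and quantifier swap
  obtain ⟨S0, hS0c, hS0gen⟩ :=
    (inferInstance : MeasurableSpace.CountablyGenerated (PathSpace T d)).isCountablyGenerated
  have hgen : (inferInstance : MeasurableSpace (PathSpace T d))
      = MeasurableSpace.generateFrom (generatePiSystem S0) := by
    rw [generateFrom_generatePiSystem_eq]; exact hS0gen
  have hmeas0 : ∀ t ∈ generatePiSystem S0, MeasurableSet t := by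
    refine generatePiSystem_measurableSet (fun s hs => ?_)
    rw [hS0gen]
    exact MeasurableSpace.measurableSet_generateFrom hs
  have main : ∀ᵐ x ∂(volume : Measure (Torus d)),
      ∀ ⦃A : Set (PathSpace T d)⦄, MeasurableSet A →
        k x A = νx x ((fun p : Torus d × Torus d => γY p.2) ⁻¹' A) := by
    refine MeasurableSpace.ae_induction_on_inter hgen (isPiSystem_generatePiSystem S0)
      ?_ ?_ ?_ ?_
    · exact ae_of_all _ (by simp)
    · rw [ae_ball_iff (countable_generatePiSystem' hS0c)]
      intro t ht
      exact key t (hmeas0 t ht)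
    · refine ae_of_all _ fun x t ht hx => ?_
      haveI := hk.1 x
      haveI := hνx.1 x
      rw [Set.preimage_compl, measure_compl ht (measure_ne_top _ _),
        measure_compl (mB ht) (measure_ne_top _ _), hx, measure_univ, measure_univ]
    · refine ae_of_all _ fun x f hdisj hfm hx => ?_
      rw [measure_iUnion hdisj hfm, Set.preimage_iUnion,
        measure_iUnion (fun i j hij => (hdisj hij).preimage _) (fun i => mB (hfm i))]
      exact tsum_congr hx
  filter_upwards [main] with x hx A hA
  rw [hx hA]
  have h1 : ∀ y : Torus d, Measure.dirac (γY y) A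
      = (γY ⁻¹' A).indicator (1 : Torus d → ℝ≥0∞) y := by
    intro y
    rw [Measure.dirac_apply' _ hA]
    by_cases h : γY y ∈ A <;> simp [Set.indicator, h]
  rw [lintegral_congr h1, lintegral_indicator_one (hγY hA),
    Measure.map_apply measurable_snd (hγY hA)]
  rfl
end
end

section
/- Let b : [0,T] × T^d → R^d be a Borel vector field with ∫_0^T ∫_{T^d} |b(s,x)|^2 dx ds < ∞, and let η be a Borel probability measure on Γ_T concentrated on integral curves of b with (e_s)_#η = L^d for every s ∈ [0,T]. For N ∈ N let K_N := {γ ∈ Γ_T : γ is absolutely continuous and ∫_0^T |γ'(s)|^2 ds ≤ N}. Then each K_N is a compact subset of Γ_T, and η(Γ_T \ K_N) ≤ (1/N) ∫_0^T ∫_{T^d} |b(s,x)|^2 dx ds; in particular η is tight. -/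
open MeasureTheory Set Filter Topology
open scoped ENNReal

noncomputable section

/-- The set `K_N` of absolutely continuous paths with derivative of squared `L^2` norm
at most `N`. -/
def KN (T : ℝ) (d : ℕ) (hT : 0 ≤ T) (N : ℕ) : Set (PathSpace T d) :=
  {γ | ∃ v : ℝ → Vec d, MeasureTheory.IntegrableOn v (Set.Ioc 0 T) volume ∧
    (∫⁻ s in Set.Ioc (0 : ℝ) T, (‖v s‖₊ : ℝ≥0∞) ^ 2) ≤ (N : ℝ≥0∞) ∧
    ∀ t : Set.Icc (0 : ℝ) T,
      γ t = γ ⟨0, Set.left_mem_Icc.2 hT⟩ + projT d (∫ s in Set.Ioc (0 : ℝ) (t : ℝ), v s)}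

/-!
A path of `K_N` is `x₀ + ∫₀ᵗ w` with `‖w‖_{L²} ≤ √N`. Encoding `w` by the functional `⟪w, ·⟫`,
`K_N` is the image of `𝕋^d × B`, where `B` is the closed ball of radius `√N` in the dual of
`L²(0,T)` with the weak-* topology, which is compact by Banach–Alaoglu. The map is continuous since
`(∫₀ᵗ w)ᵢ = ⟪w, 1_{(0,t]} eᵢ⟫`, `t ↦ 1_{(0,t]} eᵢ` is norm-continuous, and evaluation is jointly
continuous on bounded sets of functionals.

An integral curve of `b` lies in `K_N` as soon as its energy `∫₀ᵀ |b(s,γ(s))|² ds` is at most `N`.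
As every time marginal of `η` is Lebesgue measure, Tonelli gives `∫ energy dη = ‖b‖²_{L²}`, and
Markov's inequality bounds `η(K_Nᶜ)`; the bound tends to `0` as `N → ∞`, whence tightness.
-/

open scoped symmDiff Interval

theorem WeakDual.continuous_eval_of_mem_closedBall {𝕜 E : Type*} [NontriviallyNormedField 𝕜]
    [SeminormedAddCommGroup E] [NormedSpace 𝕜 E] (r : NNReal) :
    Continuous fun p : (WeakDual.toStrongDual ⁻¹' Metric.closedBall (0 : StrongDual 𝕜 E) r) × E =>
      (p.1 : WeakDual 𝕜 E) p.2 := by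
  refine continuous_prod_of_continuous_lipschitzWith' _ r (fun φ => ?_)
    fun u => (WeakDual.eval_continuous u).comp continuous_subtype_val
  exact (WeakDual.toStrongDual (φ : WeakDual 𝕜 E)).lipschitz.weaken
    (by simpa [← NNReal.coe_le_coe] using mem_closedBall_zero_iff.1 φ.2)

theorem Set.Ioc_symmDiff_Ioc_subset_uIoc {α : Type*} [LinearOrder α] (a s t : α) :
    Ioc a s ∆ Ioc a t ⊆ Ι s t := by
  intro x hx
  simp only [Set.mem_symmDiff, Set.mem_Ioc, Set.mem_uIoc] at hx ⊢
  grind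

theorem tendsto_measure_Ioc_symmDiff_Ioc {μ : Measure ℝ} (hμ : μ ≤ volume) (a t : ℝ) :
    Tendsto (fun s => μ (Ioc a s ∆ Ioc a t)) (𝓝 t) (𝓝 0) := by
  have hlim : Tendsto (fun s => ENNReal.ofReal |s - t|) (𝓝 t) (𝓝 0) :=
    (ENNReal.continuous_ofReal.comp (continuous_id.sub continuous_const).abs).tendsto' t 0
      (by simp)
  refine tendsto_of_tendsto_of_tendsto_of_le_of_le tendsto_const_nhds hlim (fun _ => zero_le)
    fun s => ?_
  calc μ (Ioc a s ∆ Ioc a t) ≤ volume (Ι s t) :=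
        (hμ _).trans (measure_mono (Set.Ioc_symmDiff_Ioc_subset_uIoc a s t))
    _ = ENNReal.ofReal |s - t| := by rw [Real.volume_uIoc, abs_sub_comm]

theorem lintegral_nnnorm_sq_le_iff {α E : Type*} [MeasurableSpace α] [NormedAddCommGroup E]
    {μ : Measure α} (v : α → E) (N : NNReal) :
    ∫⁻ x, (‖v x‖₊ : ℝ≥0∞) ^ 2 ∂μ ≤ N ↔ eLpNorm v 2 μ ≤ NNReal.sqrt N := by
  have h := eLpNorm_nnreal_pow_eq_lintegral (f := v) (μ := μ) (p := 2) two_ne_zero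
  simp only [NNReal.coe_ofNat, ENNReal.rpow_ofNat, ENNReal.coe_ofNat, enorm_eq_nnnorm] at h
  rw [← h, ← NNReal.sq_sqrt N, ENNReal.coe_pow, NNReal.sqrt_sq]
  exact ENNReal.pow_le_pow_left_iff two_ne_zero

theorem Lp.norm_le_coe_iff_eLpNorm_le {α E : Type*} [MeasurableSpace α] [NormedAddCommGroup E]
    {p : ℝ≥0∞} {μ : Measure α} (w : Lp E p μ) (r : NNReal) :
    ‖w‖ ≤ r ↔ eLpNorm w p μ ≤ r := by
  rw [Lp.norm_def, ← ENNReal.coe_toReal,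
    ENNReal.toReal_le_toReal (Lp.eLpNorm_ne_top w) ENNReal.coe_ne_top]

theorem meas_lt_le_inv_mul_lintegral {α : Type*} [MeasurableSpace α] {μ : Measure α}
    {f : α → ℝ≥0∞} (hf : AEMeasurable f μ) (c : ℝ≥0∞) :
    μ {x | c < f x} ≤ c⁻¹ * ∫⁻ x, f x ∂μ := by
  rcases eq_or_ne c 0 with rfl | hc0
  · rcases eq_or_ne (∫⁻ x, f x ∂μ) 0 with h | h
    · have hf0 : ∀ᵐ x ∂μ, f x = 0 := (lintegral_eq_zero_iff' hf).1 h
      exact (measure_mono_null (fun x (hx : 0 < f x) => hx.ne') (ae_iff.1 hf0)).trans_le zero_le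
    · simp [ENNReal.top_mul h]
  rcases eq_or_ne c ⊤ with rfl | hctop
  · simp
  calc μ {x | c < f x} ≤ μ {x | c ≤ f x} := measure_mono fun x (hx : c < f x) => hx.le
    _ ≤ c⁻¹ * ∫⁻ x, f x ∂μ :=
      (ENNReal.mul_le_iff_le_inv hc0 hctop).1 (mul_meas_ge_le_lintegral₀ hf c)

theorem exists_isCompact_measure_compl_le {X : Type*} [TopologicalSpace X] [MeasurableSpace X]
    (μ : Measure X) {K : ℕ → Set X} (hK : ∀ N, IsCompact (K N)) {C : ℝ≥0∞} (hC : C ≠ ∞)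
    (hμK : ∀ N : ℕ, μ (K N)ᶜ ≤ (N : ℝ≥0∞)⁻¹ * C) {ε : ℝ≥0∞} (hε : 0 < ε) :
    ∃ L, IsCompact L ∧ μ Lᶜ ≤ ε := by
  have hlim : Tendsto (fun N : ℕ => (N : ℝ≥0∞)⁻¹ * C) atTop (𝓝 0) := by
    simpa using ENNReal.Tendsto.mul_const ENNReal.tendsto_inv_nat_nhds_zero (Or.inr hC)
  obtain ⟨N, hN⟩ := ((hlim.eventually (ge_mem_nhds hε)).exists)
  exact ⟨K N, hK N, (hμK N).trans hN⟩

section Compactness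

variable {T : ℝ} {d : ℕ}

abbrev L2Ioc (T : ℝ) (d : ℕ) : Type := Lp (Vec d) 2 (volume.restrict (Ioc (0 : ℝ) T))

def indicatorIocLp (T t : ℝ) (c : Vec d) : L2Ioc T d :=
  indicatorConstLp 2 (measurableSet_Ioc : MeasurableSet (Ioc 0 t)) (measure_ne_top _ _) c

theorem continuous_indicatorIocLp (T : ℝ) (c : Vec d) :
    Continuous fun t => indicatorIocLp T t c :=
  continuous_indicatorConstLp_set ENNReal.ofNat_ne_top fun t =>
    tendsto_measure_Ioc_symmDiff_Ioc Measure.restrict_le_self 0 t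

theorem inner_indicatorIocLp_single {t : ℝ} (ht : t ≤ T) (w : L2Ioc T d) (i : Fin d) :
    inner ℝ (indicatorIocLp T t (EuclideanSpace.single i 1)) w = (∫ s in Ioc 0 t, w s) i := by
  rw [indicatorIocLp, L2.inner_indicatorConstLp_eq_inner_setIntegral,
    EuclideanSpace.inner_single_left, Measure.restrict_restrict measurableSet_Ioc,
    Ioc_inter_Ioc, sup_idem, inf_eq_left.2 ht]
  simp

theorem continuous_projT : Continuous (projT d) :=
  continuous_pi fun i => (AddCircle.continuous_mk' 1).comp (PiLp.continuous_apply 2 _ i)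

@[simp]
theorem projT_zero : projT d 0 = 0 := by
  ext i
  simp [projT]

abbrev WeakBall (T : ℝ) (d : ℕ) (r : NNReal) : Set (WeakDual ℝ (L2Ioc T d)) :=
  WeakDual.toStrongDual ⁻¹' Metric.closedBall 0 r

/-- The path `t ↦ x₀ + ∫₀ᵗ w` for `φ = ⟪w, ·⟫`, written through `φ` so that it depends
continuously on `φ` in the weak-* topology. -/
def pathOfDual (r : NNReal) : C(Torus d × WeakBall T d r, PathSpace T d) :=
  ContinuousMap.curry ⟨fun p => p.1.1 + projT d (WithLp.toLp 2 fun i =>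
      (p.1.2 : WeakDual ℝ (L2Ioc T d)) (indicatorIocLp T p.2 (EuclideanSpace.single i 1))), by
    refine (continuous_fst.comp continuous_fst).add (continuous_projT.comp ?_)
    refine (PiLp.continuous_toLp 2 _).comp (continuous_pi fun i => ?_)
    exact (WeakDual.continuous_eval_of_mem_closedBall r).comp
      ((continuous_snd.comp continuous_fst).prodMk
        ((continuous_indicatorIocLp T _).comp (continuous_subtype_val.comp continuous_snd)))⟩

theorem pathOfDual_apply (r : NNReal) (x₀ : Torus d) (φ : WeakBall T d r) (t : Icc 0 T) :
    pathOfDual r (x₀, φ) t = x₀ + projT d (∫ s in Ioc 0 (t : ℝ),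
      ((InnerProductSpace.toDual ℝ (L2Ioc T d)).symm (WeakDual.toStrongDual φ.1) :
        ℝ → Vec d) s) := by
  simp only [pathOfDual, ContinuousMap.curry_apply, ContinuousMap.coe_mk]
  congr 2
  ext i
  rw [← inner_indicatorIocLp_single t.2.2, real_inner_comm, InnerProductSpace.toDual_symm_apply]
  rfl

theorem KN_eq_range (T : ℝ) (hT : 0 ≤ T) (d N : ℕ) :
    KN T d hT N = Set.range (pathOfDual (T := T) (d := d) (NNReal.sqrt N)) := by
  ext γ
  constructor
  · rintro ⟨v, hv, hvN, hγ⟩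
    have hvL2 : MemLp v 2 (volume.restrict (Ioc 0 T)) :=
      ⟨hv.aestronglyMeasurable, ((lintegral_nnnorm_sq_le_iff v N).1 (mod_cast hvN)).trans_lt
        ENNReal.coe_lt_top⟩
    set w : L2Ioc T d := hvL2.toLp v
    have hw : ‖w‖ ≤ NNReal.sqrt N := by
      rw [Lp.norm_le_coe_iff_eLpNorm_le, eLpNorm_congr_ae hvL2.coeFn_toLp]
      exact (lintegral_nnnorm_sq_le_iff v N).1 (mod_cast hvN)
    set φ : WeakDual ℝ (L2Ioc T d) := StrongDual.toWeakDual (InnerProductSpace.toDual ℝ _ w)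
    have hφ : φ ∈ WeakBall T d (NNReal.sqrt N) := by
      simpa [φ, WeakBall] using hw
    refine ⟨(γ ⟨0, left_mem_Icc.2 hT⟩, ⟨φ, hφ⟩), ContinuousMap.ext fun t => ?_⟩
    rw [pathOfDual_apply, hγ t]
    congr 2
    rw [show WeakDual.toStrongDual φ = InnerProductSpace.toDual ℝ _ w from rfl,
      LinearIsometryEquiv.symm_apply_apply]
    exact integral_congr_ae
      (ae_restrict_of_ae_restrict_of_subset (Ioc_subset_Ioc_right t.2.2) hvL2.coeFn_toLp)
  · rintro ⟨⟨x₀, φ⟩, rfl⟩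
    set w : L2Ioc T d := (InnerProductSpace.toDual ℝ (L2Ioc T d)).symm (WeakDual.toStrongDual φ.1)
    have hw : ‖w‖ ≤ NNReal.sqrt N := by
      simpa [w] using mem_closedBall_zero_iff.1 φ.2
    refine ⟨w, (Lp.memLp w).integrable one_le_two, ?_, fun t => ?_⟩
    · exact_mod_cast (lintegral_nnnorm_sq_le_iff _ N).2 ((Lp.norm_le_coe_iff_eLpNorm_le w _).1 hw)
    · rw [pathOfDual_apply, pathOfDual_apply]
      simp [w]

theorem isCompact_KN (T : ℝ) (hT : 0 ≤ T) (d N : ℕ) : IsCompact (KN T d hT N) := by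
  have : CompactSpace (WeakBall T d (NNReal.sqrt N)) :=
    isCompact_iff_compactSpace.1 (WeakDual.isCompact_closedBall _ _)
  rw [KN_eq_range]
  exact isCompact_range (ContinuousMap.continuous _)

end Compactness

section Energy

variable {T : ℝ} {d : ℕ}

def energyAlong (hT : 0 ≤ T) (b : ℝ → Torus d → Vec d) (γ : PathSpace T d) : ℝ≥0∞ :=
  ∫⁻ s in Ioc 0 T, (‖b s (extendPath hT γ s)‖₊ : ℝ≥0∞) ^ 2

theorem continuous_extendPath_uncurry (hT : 0 ≤ T) :
    Continuous fun q : PathSpace T d × ℝ => extendPath hT q.1 q.2 :=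
  continuous_eval.comp
    (continuous_fst.prodMk ((continuous_projIcc (h := hT)).comp continuous_snd))

theorem measurable_nnnorm_sq_comp_extendPath {b : ℝ → Torus d → Vec d} (hT : 0 ≤ T)
    (hb : Measurable (Function.uncurry b)) :
    Measurable fun q : PathSpace T d × ℝ => (‖b q.2 (extendPath hT q.1 q.2)‖₊ : ℝ≥0∞) ^ 2 :=
  ((hb.comp (measurable_snd.prodMk (continuous_extendPath_uncurry hT).measurable)).nnnorm
    |>.coe_nnreal_ennreal).pow_const 2

theorem measurable_energyAlong {b : ℝ → Torus d → Vec d} (hT : 0 ≤ T)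
    (hb : Measurable (Function.uncurry b)) : Measurable (energyAlong hT b) :=
  (measurable_nnnorm_sq_comp_extendPath hT hb).lintegral_prod_right

theorem lintegral_energyAlong {b : ℝ → Torus d → Vec d} (hT : 0 ≤ T)
    (hb : Measurable (Function.uncurry b)) (η : Measure (PathSpace T d)) [SFinite η]
    (hη : ∀ s : Icc (0 : ℝ) T,
      Measure.map (fun γ : PathSpace T d => γ s) η = (volume : Measure (Torus d))) :
    ∫⁻ γ, energyAlong hT b γ ∂η
      = ∫⁻ s in Ioo 0 T, ∫⁻ x, (‖b s x‖₊ : ℝ≥0∞) ^ 2 ∂(volume : Measure (Torus d)) := by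
  have hslice : ∀ s ∈ Ioc (0 : ℝ) T, ∫⁻ γ, (‖b s (extendPath hT γ s)‖₊ : ℝ≥0∞) ^ 2 ∂η
      = ∫⁻ x, (‖b s x‖₊ : ℝ≥0∞) ^ 2 ∂(volume : Measure (Torus d)) := fun s hs => by
    have hs' : s ∈ Icc 0 T := Ioc_subset_Icc_self hs
    simp only [extendPath, projIcc_of_mem hT hs']
    rw [← hη ⟨s, hs'⟩, lintegral_map
      ((hb.of_uncurry_left.nnnorm.coe_nnreal_ennreal).pow_const 2)
      (continuous_eval_const _).measurable]
  rw [Measure.restrict_congr_set Ioo_ae_eq_Ioc, ← setLIntegral_congr_fun measurableSet_Ioc hslice]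
  exact lintegral_lintegral_swap (measurable_nnnorm_sq_comp_extendPath hT hb).aemeasurable

theorem mem_KN_of_energyAlong_le {b : ℝ → Torus d → Vec d} (hT : 0 ≤ T) {γ : PathSpace T d}
    (hγ : IsIntegralCurveOf hT b γ) {N : ℕ} (hN : energyAlong hT b γ ≤ N) : γ ∈ KN T d hT N :=
  ⟨_, hγ.1, hN, hγ.2⟩

theorem measure_compl_KN_le {b : ℝ → Torus d → Vec d} (hT : 0 ≤ T)
    (hb : Measurable (Function.uncurry b)) (η : Measure (PathSpace T d)) [SFinite η]
    (hcurves : ConcentratedOnCurves hT b η)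
    (hη : ∀ s : Icc (0 : ℝ) T,
      Measure.map (fun γ : PathSpace T d => γ s) η = (volume : Measure (Torus d))) (N : ℕ) :
    η (KN T d hT N)ᶜ
      ≤ (N : ℝ≥0∞)⁻¹ * ∫⁻ s in Ioo 0 T, ∫⁻ x, (‖b s x‖₊ : ℝ≥0∞) ^ 2
          ∂(volume : Measure (Torus d)) := by
  have hsub : (KN T d hT N)ᶜ ≤ᵐ[η] {γ | (N : ℝ≥0∞) < energyAlong hT b γ} := by
    filter_upwards [hcurves] with γ hγ hγK
    exact lt_of_not_ge fun hN => hγK (mem_KN_of_energyAlong_le hT hγ hN)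
  calc η (KN T d hT N)ᶜ ≤ η {γ | (N : ℝ≥0∞) < energyAlong hT b γ} := measure_mono_ae hsub
    _ ≤ _ := by
      rw [← lintegral_energyAlong hT hb η hη]
      exact meas_lt_le_inv_mul_lintegral (measurable_energyAlong hT hb).aemeasurable _

end Energy

/-- each `K_N` is compact, `η(K_Nᶜ) ≤ (1/N)‖b‖_{L²}²`, and `η` is tight. -/
theorem stmt_14 (T : ℝ) (hT : 0 < T) (d : ℕ) (b : ℝ → Torus d → Vec d)
    (hb : Measurable (Function.uncurry b))
    (hbL2 : ∫⁻ s in Set.Ioo 0 T, ∫⁻ x, (‖b s x‖₊ : ℝ≥0∞) ^ 2 ∂(volume : Measure (Torus d)) < ∞)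
    (η : Measure (PathSpace T d)) [IsProbabilityMeasure η]
    (hcurves : ConcentratedOnCurves hT.le b η)
    (hinc : ∀ s : Set.Icc (0 : ℝ) T,
      Measure.map (fun γ : PathSpace T d => γ s) η = (volume : Measure (Torus d))) :
    (∀ N : ℕ, IsCompact (KN T d hT.le N)) ∧
    (∀ N : ℕ, η (KN T d hT.le N)ᶜ
      ≤ (N : ℝ≥0∞)⁻¹ * ∫⁻ s in Set.Ioo 0 T, ∫⁻ x, (‖b s x‖₊ : ℝ≥0∞) ^ 2
          ∂(volume : Measure (Torus d))) ∧
    (∀ ε : ℝ≥0∞, 0 < ε → ∃ K : Set (PathSpace T d), IsCompact K ∧ η Kᶜ ≤ ε) := by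
  have hcompact := isCompact_KN T hT.le d
  have hbound := measure_compl_KN_le hT.le hb η hcurves hinc
  exact ⟨hcompact, hbound, fun ε hε =>
    exists_isCompact_measure_compl_le η hcompact hbL2.ne hbound hε⟩
end
end
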